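/- Discrete angular momentum conservation: for any skew-symmetric matrix Θ ∈ ℝ^{3×3}, the discrete gradient of the linear field x ↦ Θx satisfies ⟨∇(Θx)⟩_i = Θ, and since Σ_i |ω_i| T_i : Θ = 0 for symmetric T_i (orthogonality of symmetric and skew-symmetric matrices) and v_i · Θ v_i = 0, the quantity Σ_i M_i v_i · Θ x_i is conserved under dx_i/dt = v_i, ρ_i dv_i/dt = ⟨div T⟩_i; equivalently Σ_i x_i × (M_i v_i) is an integral of motion. -/

import Mathlib

open scoped RealInnerProductSpace

/-- Frobenius inner product of `3×3` matrices. -/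
def frob3 (Amat Bmat : Matrix (Fin 3) (Fin 3) ℝ) : ℝ :=
  ∑ k, ∑ l, Amat k l * Bmat k l

/-- Action of a matrix `Θ` on a vector of `ℝ³`. -/
def matAct (Θ : Matrix (Fin 3) (Fin 3) ℝ) (u : EuclideanSpace ℝ (Fin 3)) :
    EuclideanSpace ℝ (Fin 3) :=
  WithLp.toLp 2 (fun k => ∑ l, Θ k l * u l)

/-!
Along the flow, `d/dt ∑ M_i ⟪v_i, Θ x_i⟫ = ∑ A_i ⟪f_i, Θ x_i⟫ + ∑ M_i ⟪v_i, Θ v_i⟫` because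
`M_i ρ_i⁻¹ = A_i`. The second sum vanishes because `Θ` is skew, and by discrete integration by
parts the first is `-∑ A_i T_i : Θ`, which vanishes because symmetric and skew matrices are
Frobenius-orthogonal.
-/

open Matrix

lemma dotProduct_mulVec_self_eq_zero_of_skew {n R : Type*} [Fintype n] [CommRing R]
    [IsAddTorsionFree R] {Θ : Matrix n n R} (hΘ : Θᵀ = -Θ) (u : n → R) : u ⬝ᵥ Θ *ᵥ u = 0 :=
  self_eq_neg.mp <| calc
    u ⬝ᵥ Θ *ᵥ u = Θᵀ *ᵥ u ⬝ᵥ u := by rw [dotProduct_mulVec, mulVec_transpose, dotProduct_comm]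
    _ = -(u ⬝ᵥ Θ *ᵥ u) := by rw [hΘ, neg_mulVec, neg_dotProduct, dotProduct_comm]

lemma trace_mul_eq_zero_of_symm_of_skew {n R : Type*} [Fintype n] [CommRing R]
    [IsAddTorsionFree R] {S Θ : Matrix n n R} (hS : Sᵀ = S) (hΘ : Θᵀ = -Θ) :
    (S * Θ).trace = 0 :=
  self_eq_neg.mp <| calc
    (S * Θ).trace = (Θᵀ * Sᵀ).trace := by rw [← transpose_mul, trace_transpose]
    _ = -(S * Θ).trace := by rw [hΘ, hS, neg_mul, trace_neg, trace_mul_comm]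

lemma frob3_eq_trace (A B : Matrix (Fin 3) (Fin 3) ℝ) : frob3 A B = (A * Bᵀ).trace := by
  simp [frob3, trace, mul_apply]

lemma frob3_eq_zero_of_symm_of_skew {S Θ : Matrix (Fin 3) (Fin 3) ℝ} (hS : Sᵀ = S)
    (hΘ : Θᵀ = -Θ) : frob3 S Θ = 0 := by
  rw [frob3_eq_trace, hΘ, mul_neg, trace_neg, trace_mul_eq_zero_of_symm_of_skew hS hΘ, neg_zero]

lemma matAct_eq_toEuclideanCLM (Θ : Matrix (Fin 3) (Fin 3) ℝ) (u : EuclideanSpace ℝ (Fin 3)) :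
    matAct Θ u = toEuclideanCLM (𝕜 := ℝ) Θ u :=
  rfl

lemma inner_matAct_self_eq_zero_of_skew {Θ : Matrix (Fin 3) (Fin 3) ℝ} (hΘ : Θᵀ = -Θ)
    (u : EuclideanSpace ℝ (Fin 3)) : ⟪u, matAct Θ u⟫ = 0 := by
  rw [matAct_eq_toEuclideanCLM, inner_toEuclideanCLM,
    dotProduct_mulVec_self_eq_zero_of_skew hΘ]

lemma HasDerivAt.inner_matAct {v x : ℝ → EuclideanSpace ℝ (Fin 3)}
    {v' x' : EuclideanSpace ℝ (Fin 3)} {t : ℝ} (Θ : Matrix (Fin 3) (Fin 3) ℝ)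
    (hv : HasDerivAt v v' t) (hx : HasDerivAt x x' t) :
    HasDerivAt (fun s => ⟪v s, matAct Θ (x s)⟫) (⟪v t, matAct Θ x'⟫ + ⟪v', matAct Θ (x t)⟫) t :=
  hv.inner ℝ ((toEuclideanCLM (𝕜 := ℝ) Θ).hasFDerivAt.comp_hasDerivAt t hx)

theorem discrete_angular_momentum_conservation_general {N : ℕ}
    (Θ : Matrix (Fin 3) (Fin 3) ℝ) (hΘ : Θ.transpose = -Θ)
    (A ρ M : Fin N → ℝ) (hρpos : ∀ i, 0 < ρ i)
    (hM : ∀ i, A i * ρ i = M i)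
    (x v f : Fin N → ℝ → EuclideanSpace ℝ (Fin 3))
    (T : Fin N → ℝ → Matrix (Fin 3) (Fin 3) ℝ)
    (hTsymm : ∀ i t, (T i t).transpose = T i t)
    -- seed trajectories and momentum equation
    (hx : ∀ i t, HasDerivAt (x i) (v i t) t)
    (hv : ∀ i t, HasDerivAt (v i) ((ρ i)⁻¹ • f i t) t)
    -- discrete integration by parts applied to the linear field `Θx`,
    -- using exactness of the discrete gradient on linear functions:
    (hibp : ∀ t, (∑ i, A i * ⟪f i t, matAct Θ (x i t)⟫)
              = -(∑ i, A i * frob3 (T i t) Θ)) :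
    ∀ t, (∑ i, M i * ⟪v i t, matAct Θ (x i t)⟫)
        = ∑ i, M i * ⟪v i 0, matAct Θ (x i 0)⟫ := by
  have hmass : ∀ i, M i * (ρ i)⁻¹ = A i := fun i => by
    rw [← hM i, mul_inv_cancel_right₀ (hρpos i).ne']
  have hderiv : ∀ t, HasDerivAt (fun s => ∑ i, M i * ⟪v i s, matAct Θ (x i s)⟫) 0 t := by
    intro t
    have hsum := HasDerivAt.fun_sum (u := Finset.univ)
      fun i _ => ((hv i t).inner_matAct Θ (hx i t)).const_mul (M i)
    have hrate : ∑ i, M i * (⟪v i t, matAct Θ (v i t)⟫ + ⟪(ρ i)⁻¹ • f i t, matAct Θ (x i t)⟫)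
        = ∑ i, A i * ⟪f i t, matAct Θ (x i t)⟫ :=
      Finset.sum_congr rfl fun i _ => by
        rw [inner_matAct_self_eq_zero_of_skew hΘ, zero_add, real_inner_smul_left, ← mul_assoc,
          hmass]
    rwa [hrate, hibp t, Finset.sum_eq_zero fun i _ => by
      rw [frob3_eq_zero_of_symm_of_skew (hTsymm i t) hΘ, mul_zero], neg_zero] at hsum
  exact fun t => is_const_of_deriv_eq_zero (fun s => (hderiv s).differentiableAt)
    (fun s => (hderiv s).deriv) t 0

/-- Discrete angular momentum conservation: for a skew-symmetric `Θ`, the discrete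
gradient of `x ↦ Θx` equals `Θ`, and the quantity `∑_i M_i v_i · Θ x_i` is conserved
under `dx_i/dt = v_i`, `ρ_i dv_i/dt = ⟨div T⟩_i` with symmetric stresses `T_i`. -/
theorem discrete_angular_momentum_conservation {N : ℕ}
    (Θ : Matrix (Fin 3) (Fin 3) ℝ) (hΘ : Θ.transpose = -Θ)
    (A ρ M : Fin N → ℝ) (hApos : ∀ i, 0 < A i) (hρpos : ∀ i, 0 < ρ i)
    (hM : ∀ i, A i * ρ i = M i)
    (x v f : Fin N → ℝ → EuclideanSpace ℝ (Fin 3))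
    (T : Fin N → ℝ → Matrix (Fin 3) (Fin 3) ℝ)
    (hTsymm : ∀ i t, (T i t).transpose = T i t)
    -- seed trajectories and momentum equation
    (hx : ∀ i t, HasDerivAt (x i) (v i t) t)
    (hv : ∀ i t, HasDerivAt (v i) ((ρ i)⁻¹ • f i t) t)
    -- discrete integration by parts applied to the linear field `Θx`,
    -- using exactness of the discrete gradient on linear functions:
    (hibp : ∀ t, (∑ i, A i * ⟪f i t, matAct Θ (x i t)⟫)
              = -(∑ i, A i * frob3 (T i t) Θ)) :
    ∀ t, (∑ i, M i * ⟪v i t, matAct Θ (x i t)⟫)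
        = ∑ i, M i * ⟪v i 0, matAct Θ (x i 0)⟫ :=
  discrete_angular_momentum_conservation_general Θ hΘ A ρ M hρpos hM x v f T hTsymm hx hv hibp
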